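/- arXiv:1808.05240 — 5 statements merged into one kernel-verified Lean document; each statement's English description precedes it below -/
import Mathlib

section
/- Let w, w̃ ∈ R^n be nonzero with ‖w̃‖ ≥ ‖w‖ = c > 0, let w* ∈ R^n be a unit vector, and let θ(u, w*) = arccos(⟨u,w*⟩/‖u‖) denote the angle between a nonzero vector u and w*. Then |θ(w, w*) − θ(w̃, w*)| ≤ (π/(2c)) · ‖w − w̃‖. -/
/-!
Angles to a fixed vector change by at most the angle between the moving vectors (triangle inequality
for angles). Between unit vectors the angle is at most `π/2` times the chord, by Jordan's inequality
`cos θ ≤ 1 - 2θ²/π²`. Finally, radially projecting the longer vector `w̃` onto the sphere of radius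
`‖w‖` does not increase its distance to `w`, so `‖w‖ · ‖w/‖w‖ - w̃/‖w̃‖‖ ≤ ‖w - w̃‖`.
-/

open InnerProductGeometry NormedSpace RealInnerProductSpace
open scoped Real

namespace InnerProductGeometry

variable {V : Type*} [NormedAddCommGroup V] [InnerProductSpace ℝ V]

theorem abs_angle_sub_angle_le_angle (x y z : V) : |angle x z - angle y z| ≤ angle x y := by
  rw [abs_sub_le_iff]
  constructor
  · linarith [angle_le_angle_add_angle x y z]
  · linarith [angle_le_angle_add_angle y x z, angle_comm x y]

theorem angle_le_pi_div_two_mul_norm_sub_of_norm_eq_one {x y : V} (hx : ‖x‖ = 1)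
    (hy : ‖y‖ = 1) : angle x y ≤ π / 2 * ‖x - y‖ := by
  set θ := angle x y
  have hchord : ‖x - y‖ ^ 2 = 2 - 2 * Real.cos θ := by
    rw [norm_sub_sq_real, hx, hy, inner_eq_cos_angle_of_norm_eq_one hx hy]
    ring
  have hjordan : Real.cos θ ≤ 1 - 2 / π ^ 2 * θ ^ 2 :=
    Real.cos_le_one_sub_mul_cos_sq (by rw [abs_of_nonneg (angle_nonneg x y)]; exact angle_le_pi x y)
  have hsq : (2 / π * θ) ^ 2 ≤ ‖x - y‖ ^ 2 := by
    have hexpand : (2 / π * θ) ^ 2 = 2 * (2 / π ^ 2 * θ ^ 2) := by ring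
    rw [hchord, hexpand]
    linarith
  have hlin : 2 / π * θ ≤ ‖x - y‖ := abs_le_of_sq_le_sq' hsq (norm_nonneg _) |>.2
  calc θ = π / 2 * (2 / π * θ) := by field_simp
    _ ≤ π / 2 * ‖x - y‖ := by gcongr

theorem angle_le_pi_div_two_mul_norm_normalize_sub {x y : V} (hx : x ≠ 0) (hy : y ≠ 0) :
    angle x y ≤ π / 2 * ‖normalize x - normalize y‖ := by
  simpa using angle_le_pi_div_two_mul_norm_sub_of_norm_eq_one
    (norm_normalize_eq_one_iff.mpr hx) (norm_normalize_eq_one_iff.mpr hy)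

end InnerProductGeometry

section Normalize

variable {V : Type*} [NormedAddCommGroup V] [InnerProductSpace ℝ V]

theorem norm_sub_smul_le_norm_sub_of_norm_le {x y : V} {t : ℝ} (ht₀ : 0 ≤ t) (ht₁ : t ≤ 1)
    (h : ‖x‖ ≤ t * ‖y‖) : ‖x - t • y‖ ≤ ‖x - y‖ := by
  have hinner : ⟪x, y⟫ ≤ t * ‖y‖ ^ 2 :=
    (real_inner_le_norm x y).trans (by nlinarith [norm_nonneg y])
  have hsq : ‖x - t • y‖ ^ 2 ≤ ‖x - y‖ ^ 2 := by
    rw [norm_sub_sq_real, norm_sub_sq_real, real_inner_smul_right, norm_smul,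
      Real.norm_of_nonneg ht₀]
    -- `‖x - y‖² - ‖x - t • y‖² = (1 - t) * ((1 + t) * ‖y‖² - 2 * ⟪x, y⟫)`
    have hfactor : 0 ≤ (1 - t) * ((1 + t) * ‖y‖ ^ 2 - 2 * ⟪x, y⟫) :=
      mul_nonneg (sub_nonneg.mpr ht₁) (by nlinarith [sq_nonneg ‖y‖])
    linarith
  exact abs_le_of_sq_le_sq' hsq (norm_nonneg _) |>.2

theorem norm_mul_norm_normalize_sub_le {x y : V} (h : ‖x‖ ≤ ‖y‖) :
    ‖x‖ * ‖normalize x - normalize y‖ ≤ ‖x - y‖ := by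
  rcases (norm_nonneg x).eq_or_lt with hx | hx
  · rw [← hx, zero_mul]
    exact norm_nonneg _
  have hy : 0 < ‖y‖ := hx.trans_le h
  have hscale : ‖x‖ • (normalize x - normalize y) = x - (‖x‖ / ‖y‖) • y := by
    rw [smul_sub, norm_smul_normalize, NormedSpace.normalize, smul_smul, div_eq_mul_inv]
  calc ‖x‖ * ‖normalize x - normalize y‖ = ‖x - (‖x‖ / ‖y‖) • y‖ := by
        rw [← hscale, norm_smul, norm_norm]
    _ ≤ ‖x - y‖ := norm_sub_smul_le_norm_sub_of_norm_le (by positivity)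
        ((div_le_one hy).mpr h) (by rw [div_mul_cancel₀ _ hy.ne'])

end Normalize

theorem angle_lipschitz_general {n : ℕ}
    (w wt ws : EuclideanSpace ℝ (Fin n)) (hw : w ≠ 0) (hwt : wt ≠ 0)
    (c : ℝ) (hc : ‖w‖ = c) (hcpos : 0 < c) (h : c ≤ ‖wt‖) :
    |angle w ws - angle wt ws| ≤ Real.pi / (2 * c) * ‖w - wt‖ := by
  subst hc
  calc |angle w ws - angle wt ws| ≤ angle w wt := abs_angle_sub_angle_le_angle w wt ws
    _ ≤ π / 2 * ‖normalize w - normalize wt‖ := angle_le_pi_div_two_mul_norm_normalize_sub hw hwt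
    _ = π / (2 * ‖w‖) * (‖w‖ * ‖normalize w - normalize wt‖) := by field_simp
    _ ≤ π / (2 * ‖w‖) * ‖w - wt‖ := by gcongr; exact norm_mul_norm_normalize_sub_le h

/-- For nonzero `w, w̃` with `‖w̃‖ ≥ ‖w‖ = c > 0` and unit `w*`,
`|θ(w, w*) − θ(w̃, w*)| ≤ (π/(2c)) ‖w − w̃‖`. -/
theorem angle_lipschitz {n : ℕ}
    (w wt ws : EuclideanSpace ℝ (Fin n)) (hw : w ≠ 0) (hwt : wt ≠ 0)
    (hws : ‖ws‖ = 1)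
    (c : ℝ) (hc : ‖w‖ = c) (hcpos : 0 < c) (h : c ≤ ‖wt‖) :
    |angle w ws - angle wt ws| ≤ Real.pi / (2 * c) * ‖w - wt‖ :=
  angle_lipschitz_general w wt ws hw hwt c hc hcpos h
end

section
/- Let f: R^M → R be differentiable with L-Lipschitz gradient, let Q ⊂ R^M be a nonempty closed set, and consider the blended gradient descent update w_f^{t+1} = (1−ρ)w_f^t + ρ w^t − η ∇f(w^t), w^{t+1} ∈ argmin_{w ∈ Q} ‖w − w_f^{t+1}‖², where w^t ∈ Q. Then for ρ ∈ (0,1): f(w^{t+1}) − f(w^t) ≤ −(1/2)[((1−ρ)/η)(‖w^{t+1} − w_f^t‖² − ‖w^t − w_f^t‖²) + (ρ/η − L)‖w^{t+1} − w^t‖²]. -/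
/-!
Along the segment from `w` to `w'`, Lipschitz continuity of `∇f` gives the descent lemma
`f w' ≤ f w + ⟪∇f w, w' - w⟫ + L/2 ‖w' - w‖²`. Comparing the projection `w'` of `w_f'` with the
competitor `w ∈ Q` gives `‖w' - w_f'‖² ≤ ‖w - w_f'‖²`, which after expanding
`w_f' = w - (1-ρ)(w - w_f) - η ∇f w` is an upper bound on `2η ⟪∇f w, w' - w⟫`. Substituting it
into the descent lemma gives the estimate.
-/

open scoped NNReal

section DescentLemma

variable {E : Type*} [NormedAddCommGroup E] [InnerProductSpace ℝ E] [CompleteSpace E]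
  {f : E → ℝ}

theorem hasDerivAt_comp_add_smul (hf : Differentiable ℝ f) (x v : E) (t : ℝ) :
    HasDerivAt (fun s : ℝ => f (x + s • v)) (inner ℝ (gradient f (x + t • v)) v) t := by
  have hline : HasDerivAt (fun s : ℝ => x + s • v) v t := by
    simpa using ((hasDerivAt_id t).smul_const v).const_add x
  rw [inner_gradient_left]
  exact (hf _).hasFDerivAt.comp_hasDerivAt t hline

theorem inner_gradient_sub_le {L : ℝ≥0} (hL : LipschitzWith L (gradient f)) (x y v : E) :
    inner ℝ (gradient f y - gradient f x) v ≤ L * ‖y - x‖ * ‖v‖ := by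
  calc inner ℝ (gradient f y - gradient f x) v
      ≤ ‖gradient f y - gradient f x‖ * ‖v‖ := real_inner_le_norm _ _
    _ ≤ L * ‖y - x‖ * ‖v‖ := by
        gcongr
        simpa only [dist_eq_norm] using hL.dist_le_mul y x

theorem image_le_add_inner_gradient_add_sq {L : ℝ≥0} (hf : Differentiable ℝ f)
    (hL : LipschitzWith L (gradient f)) (x y : E) :
    f y ≤ f x + inner ℝ (gradient f x) (y - x) + L / 2 * ‖y - x‖ ^ 2 := by
  set v := y - x
  -- `φ' t = ⟪∇f (x + t • v) - ∇f x, v⟫ - L t ‖v‖² ≤ 0` for `t ≥ 0`, so `φ 1 ≤ φ 0`.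
  let φ : ℝ → ℝ := fun t => f (x + t • v) - t * inner ℝ (gradient f x) v - L / 2 * t ^ 2 * ‖v‖ ^ 2
  have hφ : ∀ t, HasDerivAt φ (inner ℝ (gradient f (x + t • v)) v
      - inner ℝ (gradient f x) v - L * t * ‖v‖ ^ 2) t := by
    intro t
    have h := ((hasDerivAt_comp_add_smul hf x v t).fun_sub
      ((hasDerivAt_id' t).mul_const (inner ℝ (gradient f x) v))).fun_sub
      (((hasDerivAt_pow 2 t).const_mul (L / 2 : ℝ)).mul_const (‖v‖ ^ 2))
    exact h.congr_deriv (by push_cast; ring)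
  have hanti : AntitoneOn φ (Set.Icc 0 1) := by
    refine antitoneOn_of_hasDerivWithinAt_nonpos (convex_Icc 0 1)
      (fun t _ => (hφ t).continuousAt.continuousWithinAt) (fun t _ => (hφ t).hasDerivWithinAt) ?_
    intro t ht
    rw [interior_Icc] at ht
    have := inner_gradient_sub_le hL x (x + t • v) v
    rw [inner_sub_left, add_sub_cancel_left, norm_smul, Real.norm_of_nonneg ht.1.le] at this
    nlinarith
  have := hanti (by simp) (by simp) zero_le_one
  simp only [φ, v, one_smul, add_sub_cancel, zero_smul, add_zero] at this
  linarith

end DescentLemma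

section BlendedStep

variable {E : Type*} [NormedAddCommGroup E] [InnerProductSpace ℝ E]

theorem inner_le_of_norm_sub_blend_le (ρ η : ℝ) (g wt wf wt1 : E)
    (h : ‖wt1 - ((1 - ρ) • wf + ρ • wt - η • g)‖ ≤ ‖wt - ((1 - ρ) • wf + ρ • wt - η • g)‖) :
    2 * η * inner ℝ g (wt1 - wt) ≤
      -((1 - ρ) * (‖wt1 - wf‖ ^ 2 - ‖wt - wf‖ ^ 2) + ρ * ‖wt1 - wt‖ ^ 2) := by
  set u := wt1 - wt
  set c := wt - wf
  have hd : wt - ((1 - ρ) • wf + ρ • wt - η • g) = (1 - ρ) • c + η • g := by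
    simp only [c]; module
  have hu : wt1 - ((1 - ρ) • wf + ρ • wt - η • g) = u + ((1 - ρ) • c + η • g) := by
    rw [← hd]; simp only [u]; abel
  have ha : wt1 - wf = u + c := by simp only [u, c]; abel
  have hsq := pow_le_pow_left₀ (norm_nonneg _) h 2
  rw [hu, hd, norm_add_sq_real, inner_add_right, real_inner_smul_right, real_inner_smul_right] at hsq
  rw [ha, norm_add_sq_real, real_inner_comm u g]
  linear_combination hsq

end BlendedStep

theorem bgd_descent_estimate_general {M : ℕ}
    (f : EuclideanSpace ℝ (Fin M) → ℝ) (hf : Differentiable ℝ f)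
    (L : ℝ≥0) (hL : LipschitzWith L (gradient f))
    (Q : Set (EuclideanSpace ℝ (Fin M))) (ρ η : ℝ) (hη : 0 < η)
    (wt wf wf1 wt1 : EuclideanSpace ℝ (Fin M))
    (hwt : wt ∈ Q)
    (hupdate : wf1 = (1 - ρ) • wf + ρ • wt - η • gradient f wt)
    (hproj : ∀ w ∈ Q, ‖wt1 - wf1‖ ≤ ‖w - wf1‖) :
    f wt1 - f wt ≤
      -(1 / 2) * ((1 - ρ) / η * (‖wt1 - wf‖ ^ 2 - ‖wt - wf‖ ^ 2)
        + (ρ / η - (L : ℝ)) * ‖wt1 - wt‖ ^ 2) := by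
  subst hupdate
  have hinner := inner_le_of_norm_sub_blend_le ρ η (gradient f wt) wt wf wt1 (hproj wt hwt)
  have hdescent := image_le_add_inner_gradient_add_sq hf hL wt wt1
  have hinner' : inner ℝ (gradient f wt) (wt1 - wt) ≤
      -((1 - ρ) * (‖wt1 - wf‖ ^ 2 - ‖wt - wf‖ ^ 2) + ρ * ‖wt1 - wt‖ ^ 2) / (2 * η) := by
    rw [le_div_iff₀ (by positivity)]
    linarith
  calc f wt1 - f wt
      ≤ -((1 - ρ) * (‖wt1 - wf‖ ^ 2 - ‖wt - wf‖ ^ 2) + ρ * ‖wt1 - wt‖ ^ 2) / (2 * η)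
        + L / 2 * ‖wt1 - wt‖ ^ 2 := by linarith
    _ = _ := by field_simp; ring

/-- One step of blended gradient descent: descent estimate for the BGD update
`w_f^{t+1} = (1−ρ)w_f^t + ρ w^t − η ∇f(w^t)`, `w^{t+1} = proj_Q(w_f^{t+1})`. -/
theorem bgd_descent_estimate {M : ℕ}
    (f : EuclideanSpace ℝ (Fin M) → ℝ) (hf : Differentiable ℝ f)
    (L : ℝ≥0) (hL : LipschitzWith L (gradient f))
    (Q : Set (EuclideanSpace ℝ (Fin M))) (hQne : Q.Nonempty) (hQcl : IsClosed Q)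
    (ρ η : ℝ) (hρ : ρ ∈ Set.Ioo (0 : ℝ) 1) (hη : 0 < η)
    (wt wf wf1 wt1 : EuclideanSpace ℝ (Fin M))
    (hwt : wt ∈ Q)
    (hupdate : wf1 = (1 - ρ) • wf + ρ • wt - η • gradient f wt)
    (hwt1 : wt1 ∈ Q) (hproj : ∀ w ∈ Q, ‖wt1 - wf1‖ ≤ ‖w - wf1‖) :
    f wt1 - f wt ≤
      -(1 / 2) * ((1 - ρ) / η * (‖wt1 - wf‖ ^ 2 - ‖wt - wf‖ ^ 2)
        + (ρ / η - (L : ℝ)) * ‖wt1 - wt‖ ^ 2) :=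
  bgd_descent_estimate_general f hf L hL Q ρ η hη wt wf wf1 wt1 hwt hupdate hproj
end

section
/- Under the assumptions of the blended gradient descent proposition, if additionally ρ/η ≥ L + c for some c > 0 and w^t minimizes ‖w − w_f^t‖² over Q, then the sufficient descent property holds: f(w^{t+1}) − f(w^t) ≤ −(c/2)‖w^{t+1} − w^t‖². -/
/-!
Comparing `w^t` with `w^{t+1}` as candidates for the nearest point of `Q` to `w_f^t`, and again
for `w_f^{t+1}`, bounds the directional derivative along the step:
`η ⟪∇f(w^t), w^{t+1} - w^t⟫ ≤ -(ρ/2) ‖w^{t+1} - w^t‖²`.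
The descent lemma `f y ≤ f x + ⟪∇f x, y - x⟫ + (L/2) ‖y - x‖²` and `ρ/η ≥ L + c` finish the proof.
-/

open scoped NNReal RealInnerProductSpace

section

variable {E : Type*} [NormedAddCommGroup E] [InnerProductSpace ℝ E]

lemma hasDerivAt_apply_add_smul [CompleteSpace E] {f : E → ℝ}
    (hf : Differentiable ℝ f) (x v : E) (t : ℝ) :
    HasDerivAt (fun s : ℝ => f (x + s • v)) ⟪gradient f (x + t • v), v⟫ t := by
  have hline : HasDerivAt (fun s : ℝ => x + s • v) v t := by
    simpa using ((hasDerivAt_id t).smul_const v).const_add x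
  simpa [Function.comp_def] using
    (hf (x + t • v)).hasGradientAt.hasFDerivAt.comp_hasDerivAt t hline

lemma le_add_inner_gradient_add_of_lipschitzWith_gradient [CompleteSpace E] {f : E → ℝ}
    (hf : Differentiable ℝ f) {L : ℝ≥0} (hL : LipschitzWith L (gradient f)) (x y : E) :
    f y ≤ f x + ⟪gradient f x, y - x⟫ + L / 2 * ‖y - x‖ ^ 2 := by
  set v := y - x
  have hderiv := hasDerivAt_apply_add_smul hf x v
  have hslope (t : ℝ) (ht : 0 ≤ t) :
      ⟪gradient f (x + t • v), v⟫ ≤ ⟪gradient f x, v⟫ + L * ‖v‖ ^ 2 * t := by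
    have hgrad : ‖gradient f (x + t • v) - gradient f x‖ ≤ L * (t * ‖v‖) := by
      simpa [dist_eq_norm, norm_smul, abs_of_nonneg ht] using hL.dist_le_mul (x + t • v) x
    calc ⟪gradient f (x + t • v), v⟫
        = ⟪gradient f x, v⟫ + ⟪gradient f (x + t • v) - gradient f x, v⟫ := by
          rw [inner_sub_left]; ring
      _ ≤ ⟪gradient f x, v⟫ + ‖gradient f (x + t • v) - gradient f x‖ * ‖v‖ := by
          gcongr; exact real_inner_le_norm _ _
      _ ≤ ⟪gradient f x, v⟫ + L * (t * ‖v‖) * ‖v‖ := by gcongr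
      _ = ⟪gradient f x, v⟫ + L * ‖v‖ ^ 2 * t := by ring
  have hmodel (t : ℝ) : HasDerivAt
      (fun s : ℝ => f x + s * ⟪gradient f x, v⟫ + L / 2 * ‖v‖ ^ 2 * s ^ 2)
      (⟪gradient f x, v⟫ + L * ‖v‖ ^ 2 * t) t := by
    refine ((((hasDerivAt_id' t).mul_const _).const_add (f x)).add
      ((hasDerivAt_pow 2 t).const_mul (L / 2 * ‖v‖ ^ 2))).congr_deriv ?_
    push_cast; ring
  have key := image_le_of_deriv_right_le_deriv_boundary (a := 0) (b := 1)
    (fun t _ => (hderiv t).continuousAt.continuousWithinAt)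
    (fun t _ => (hderiv t).hasDerivWithinAt) (by simp)
    (fun t _ => (hmodel t).continuousAt.continuousWithinAt)
    (fun t _ => (hmodel t).hasDerivWithinAt) (fun t ht => hslope t ht.1)
    (Set.right_mem_Icc.2 zero_le_one)
  simpa [v] using key

lemma inner_sub_sub_le_neg_half_norm_sq {p q z : E} (h : ‖p - z‖ ≤ ‖q - z‖) :
    ⟪p - q, q - z⟫ ≤ -(‖p - q‖ ^ 2 / 2) := by
  have hsq := pow_le_pow_left₀ (norm_nonneg _) h 2
  rw [show p - z = (p - q) + (q - z) by abel, norm_add_sq_real] at hsq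
  linarith

lemma inner_le_of_blended_step {ρ η : ℝ} (hρ : ρ ≤ 1) {wf wt wf1 wt1 g : E}
    (hupdate : wf1 = (1 - ρ) • wf + ρ • wt - η • g)
    (hwt : ‖wt - wf‖ ≤ ‖wt1 - wf‖) (hwt1 : ‖wt1 - wf1‖ ≤ ‖wt - wf1‖) :
    η * ⟪g, wt1 - wt⟫ ≤ -(ρ / 2) * ‖wt1 - wt‖ ^ 2 := by
  set a := wt1 - wt
  have hstep : wt - wf1 = (1 - ρ) • (wt - wf) + η • g := by rw [hupdate]; module
  have hnew : ⟪a, wt - wf1⟫ ≤ -(‖a‖ ^ 2 / 2) := inner_sub_sub_le_neg_half_norm_sq hwt1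
  have hold : -(‖a‖ ^ 2 / 2) ≤ ⟪a, wt - wf⟫ := by
    have h := inner_sub_sub_le_neg_half_norm_sq hwt
    rw [show wt - wt1 = -a by simp [a], show wt1 - wf = a + (wt - wf) by simp [a],
      inner_neg_left, inner_add_right, real_inner_self_eq_norm_sq, norm_neg] at h
    linarith
  rw [hstep, inner_add_right, real_inner_smul_right, real_inner_smul_right] at hnew
  rw [real_inner_comm]
  nlinarith [mul_le_mul_of_nonneg_left hold (sub_nonneg.2 hρ)]

end

theorem bgd_sufficient_descent_general {M : ℕ}
    (f : EuclideanSpace ℝ (Fin M) → ℝ) (hf : Differentiable ℝ f)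
    (L : ℝ≥0) (hL : LipschitzWith L (gradient f))
    (Q : Set (EuclideanSpace ℝ (Fin M)))
    (ρ η : ℝ) (hρ : ρ ∈ Set.Ioo (0 : ℝ) 1) (hη : 0 < η)
    (c : ℝ) (hrate : (L : ℝ) + c ≤ ρ / η)
    (wt wf wf1 wt1 : EuclideanSpace ℝ (Fin M))
    (hwt : wt ∈ Q) (hprojt : ∀ w ∈ Q, ‖wt - wf‖ ≤ ‖w - wf‖)
    (hupdate : wf1 = (1 - ρ) • wf + ρ • wt - η • gradient f wt)
    (hwt1 : wt1 ∈ Q) (hproj : ∀ w ∈ Q, ‖wt1 - wf1‖ ≤ ‖w - wf1‖) :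
    f wt1 - f wt ≤ -(c / 2) * ‖wt1 - wt‖ ^ 2 := by
  have hdescent := le_add_inner_gradient_add_of_lipschitzWith_gradient hf hL wt wt1
  have hstep := inner_le_of_blended_step hρ.2.le hupdate (hprojt wt1 hwt1) (hproj wt hwt)
  have hLc : ((L : ℝ) + c) * η ≤ ρ := (le_div_iff₀ hη).1 hrate
  have hinner : ⟪gradient f wt, wt1 - wt⟫ ≤ -((L + c) / 2) * ‖wt1 - wt‖ ^ 2 := by
    refine le_of_mul_le_mul_left ?_ hη
    nlinarith [sq_nonneg ‖wt1 - wt‖]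
  linarith

/-- Sufficient descent property of blended gradient descent when `ρ/η ≥ L + c`
and `w^t = proj_Q(w_f^t)`. -/
theorem bgd_sufficient_descent {M : ℕ}
    (f : EuclideanSpace ℝ (Fin M) → ℝ) (hf : Differentiable ℝ f)
    (L : ℝ≥0) (hL : LipschitzWith L (gradient f))
    (Q : Set (EuclideanSpace ℝ (Fin M))) (hQne : Q.Nonempty) (hQcl : IsClosed Q)
    (ρ η : ℝ) (hρ : ρ ∈ Set.Ioo (0 : ℝ) 1) (hη : 0 < η)
    (c : ℝ) (hcpos : 0 < c) (hrate : (L : ℝ) + c ≤ ρ / η)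
    (wt wf wf1 wt1 : EuclideanSpace ℝ (Fin M))
    (hwt : wt ∈ Q) (hprojt : ∀ w ∈ Q, ‖wt - wf‖ ≤ ‖w - wf‖)
    (hupdate : wf1 = (1 - ρ) • wf + ρ • wt - η • gradient f wt)
    (hwt1 : wt1 ∈ Q) (hproj : ∀ w ∈ Q, ‖wt1 - wf1‖ ≤ ‖w - wf1‖) :
    f wt1 - f wt ≤ -(c / 2) * ‖wt1 - wt‖ ^ 2 :=
  bgd_sufficient_descent_general f hf L hL Q ρ η hρ hη c hrate wt wf wf1 wt1 hwt hprojt hupdate hwt1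
    hproj
end

section
/- Let f(v,w) be the population loss of the two-layer binarized-ReLU network, f(v,w) = (1/8)[v^T(I+11^T)v − 2v^T((1 − 2θ(w,w*)/π)I + 11^T)v* + (v*)^T(I+11^T)v*], with ‖w*‖=1. For θ(w,w*) ∈ (0, π), the gradient of f with respect to w is ∂f/∂w = −(v^T v*)/(2π‖w‖) · (I − ww^T/‖w‖²)w* / ‖(I − ww^T/‖w‖²)w*‖. -/
open InnerProductGeometry

/-- The population loss of the two-layer binarized-ReLU network, as a function of
the first-layer weights `w` (given `v`, `v*`, `w*`). -/
noncomputable def popLoss {m n : ℕ} (v vs : EuclideanSpace ℝ (Fin m))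
    (ws w : EuclideanSpace ℝ (Fin n)) : ℝ :=
  1 / 8 * ((∑ i, v i ^ 2 + (∑ i, v i) ^ 2)
    - 2 * ((1 - 2 * angle w ws / Real.pi) * (∑ i, v i * vs i)
        + (∑ i, v i) * (∑ i, vs i))
    + (∑ i, vs i ^ 2 + (∑ i, vs i) ^ 2))

/-! The loss is affine in `θ = angle w w*` with slope `(vᵀv*)/(2π)`, so everything reduces to the
gradient of `y ↦ angle y u = arccos (⟪y, u⟫ / (‖y‖ ‖u‖))`. The gradient of the cosine is
`(‖y‖ ‖u‖)⁻¹` times the component of `u` orthogonal to `y`, whose norm is `‖u‖ sin θ`; the factor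
`-1 / sin θ` from `arccos'` then turns it into the normalised orthogonal component divided by
`‖y‖`. -/

open scoped RealInnerProductSpace

section

variable {E : Type*} [NormedAddCommGroup E] [InnerProductSpace ℝ E]

theorem hasFDerivAt_norm {x : E} (hx : x ≠ 0) :
    HasFDerivAt (fun y : E => ‖y‖) (‖x‖⁻¹ • innerSL ℝ x) x := by
  have h := (hasStrictFDerivAt_norm_sq x).hasFDerivAt.sqrt (by positivity)
  simp only [Real.sqrt_sq (norm_nonneg _)] at h
  convert h using 1
  ext y
  simp
  ring

variable [CompleteSpace E] {f : E → ℝ} {f' x : E}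

theorem HasGradientAt.const_mul (h : HasGradientAt f f' x) (c : ℝ) :
    HasGradientAt (fun y => c * f y) (c • f') x := by
  rw [hasGradientAt_iff_hasFDerivAt, map_smul]
  exact h.hasFDerivAt.const_mul c

theorem HasGradientAt.const_add (h : HasGradientAt f f' x) (c : ℝ) :
    HasGradientAt (fun y => c + f y) f' x :=
  hasGradientAt_iff_hasFDerivAt.mpr (h.hasFDerivAt.const_add c)

end

namespace InnerProductGeometry

variable {E : Type*} [NormedAddCommGroup E] [InnerProductSpace ℝ E]

theorem starProjection_orthogonal_singleton (x u : E) :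
    (ℝ ∙ x)ᗮ.starProjection u = u - (⟪x, u⟫ / ‖x‖ ^ 2) • x := by
  rw [Submodule.starProjection_orthogonal_val, Submodule.starProjection_singleton]
  rfl

theorem norm_mul_norm_starProjection_orthogonal_singleton (x u : E) :
    ‖x‖ * ‖(ℝ ∙ x)ᗮ.starProjection u‖ = Real.sin (angle x u) * (‖x‖ * ‖u‖) := by
  rw [sin_angle_mul_norm_mul_norm, ← Real.sqrt_sq (by positivity : 0 ≤ ‖x‖ * ‖_‖)]
  congr 1
  rcases eq_or_ne x 0 with rfl | hx
  · simp
  have : ‖x‖ ≠ 0 := norm_ne_zero_iff.mpr hx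
  rw [mul_pow, starProjection_orthogonal_singleton, norm_sub_sq_real, real_inner_smul_right,
    norm_smul, mul_pow, Real.norm_eq_abs, sq_abs, real_inner_self_eq_norm_sq,
    real_inner_self_eq_norm_sq, real_inner_comm]
  field_simp
  ring

theorem hasFDerivAt_inner_div_norm_mul_norm {x : E} (hx : x ≠ 0) (u : E) :
    HasFDerivAt (fun y => ⟪y, u⟫ / (‖y‖ * ‖u‖))
      ((‖x‖ * ‖u‖)⁻¹ • innerSL ℝ ((ℝ ∙ x)ᗮ.starProjection u)) x := by
  rcases eq_or_ne u 0 with rfl | hu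
  · simpa using hasFDerivAt_const (0 : ℝ) x
  have hxu : ‖x‖ * ‖u‖ ≠ 0 := by positivity
  have hinner : HasFDerivAt (fun y => ⟪y, u⟫) (innerSL ℝ u) x := by
    convert (innerSL ℝ u).hasFDerivAt using 1
    exact funext fun y => real_inner_comm u y
  have hinv := (hasDerivAt_inv hxu).comp_hasFDerivAt x ((hasFDerivAt_norm hx).mul_const ‖u‖)
  simp only [div_eq_mul_inv]
  refine (hinner.mul hinv).congr_fderiv ?_
  rw [starProjection_orthogonal_singleton]
  ext y
  simp
  field_simp
  ring

theorem hasGradientAt_angle_left [CompleteSpace E] {x u : E} (hx : x ≠ 0)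
    (h0 : 0 < angle x u) (hπ : angle x u < Real.pi) :
    HasGradientAt (fun y => angle y u)
      (-(‖x‖ * ‖(ℝ ∙ x)ᗮ.starProjection u‖)⁻¹ • (ℝ ∙ x)ᗮ.starProjection u) x := by
  set c := ⟪x, u⟫ / (‖x‖ * ‖u‖)
  have hc1 : c ≠ 1 := (Real.arccos_pos.mp h0).ne
  have hc2 : c ≠ -1 := fun h => hπ.ne (Real.arccos_eq_pi.mpr h.le)
  have h := (Real.hasDerivAt_arccos hc2 hc1).comp_hasFDerivAt x
    (hasFDerivAt_inner_div_norm_mul_norm hx u)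
  have hθ : Real.arccos c = angle x u := rfl
  rw [← Real.sin_arccos, hθ, smul_smul] at h
  rw [hasGradientAt_iff_hasFDerivAt]
  refine h.congr_fderiv ?_
  ext y
  simp only [smul_apply, innerSL_apply_apply, map_smul,
    InnerProductSpace.toDual_apply_apply, smul_eq_mul]
  rw [norm_mul_norm_starProjection_orthogonal_singleton, mul_inv]
  ring

end InnerProductGeometry

theorem popLoss_eq_const_add_mul_angle {m n : ℕ} (v vs : EuclideanSpace ℝ (Fin m))
    (ws : EuclideanSpace ℝ (Fin n)) :
    popLoss v vs ws = fun w =>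
      (1 / 8 * ((∑ i, v i ^ 2 + (∑ i, v i) ^ 2) + (∑ i, vs i ^ 2 + (∑ i, vs i) ^ 2))
        - (∑ i, v i * vs i) / 4 - (∑ i, v i) * (∑ i, vs i) / 4)
      + (∑ i, v i * vs i) / (2 * Real.pi) * angle w ws := by
  funext w
  simp only [popLoss]
  field_simp
  ring

theorem gradient_popLoss_general {m n : ℕ}
    (v vs : EuclideanSpace ℝ (Fin m)) (w ws : EuclideanSpace ℝ (Fin n))
    (hw : w ≠ 0)
    (hθ0 : 0 < angle w ws) (hθπ : angle w ws < Real.pi) :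
    gradient (popLoss v vs ws) w
      = (-(∑ i, v i * vs i) / (2 * Real.pi * ‖w‖)) •
          ‖ws - ((inner ℝ w ws : ℝ) / ‖w‖ ^ 2) • w‖⁻¹ •
            (ws - ((inner ℝ w ws : ℝ) / ‖w‖ ^ 2) • w) := by
  rw [popLoss_eq_const_add_mul_angle, ← starProjection_orthogonal_singleton,
    (((hasGradientAt_angle_left hw hθ0 hθπ).const_mul _).const_add _).gradient, smul_smul,
    smul_smul, mul_inv]
  congr 1
  ring

/-- For `θ(w, w*) ∈ (0, π)` the gradient of the population loss with respect to `w` is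
`−(v^T v*)/(2π‖w‖) · (I − ww^T/‖w‖²)w* / ‖(I − ww^T/‖w‖²)w*‖`. -/
theorem gradient_popLoss {m n : ℕ}
    (v vs : EuclideanSpace ℝ (Fin m)) (w ws : EuclideanSpace ℝ (Fin n))
    (hw : w ≠ 0) (hws : ‖ws‖ = 1)
    (hθ0 : 0 < angle w ws) (hθπ : angle w ws < Real.pi) :
    gradient (popLoss v vs ws) w
      = (-(∑ i, v i * vs i) / (2 * Real.pi * ‖w‖)) •
          ‖ws - ((inner ℝ w ws : ℝ) / ‖w‖ ^ 2) • w‖⁻¹ •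
            (ws - ((inner ℝ w ws : ℝ) / ‖w‖ ^ 2) • w) :=
  gradient_popLoss_general v vs w ws hw hθ0 hθπ
end

section
/- Let θ = θ(w,w*) ∈ (0, π) with ‖w*‖ = 1 and w ≠ 0. Then the inner product of the expected coarse gradient E_Z[g(v,w;Z)] with the true population gradient ∂f/∂w(v,w) equals sin(θ)/(2(2π)^{3/2}‖w‖)·(v^T v*)² ≥ 0. -/
/-!
Write `u = w/‖w‖` and `p = ws - (⟪w, ws⟫/‖w‖²) w` for the component of `ws` orthogonal to `w`,
so that `‖p‖ = sin θ`, and the true gradient is a multiple of `p/‖p‖`. The coarse gradient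
is a combination of `u`, which is orthogonal to `p`, and of the unit bisector `(u + ws)/‖u + ws‖`,
where `‖u + ws‖ = 2 cos(θ/2)`; the bisector meets `p/‖p‖` with inner product `sin(θ/2)`. Hence only
the bisector term survives, and `cos(θ/2) sin(θ/2) = sin(θ)/2` gives the claimed value.
-/

open InnerProductGeometry

section RealInnerProductSpace

open Real
open scoped RealInnerProductSpace

theorem sin_eq_two_mul_sin_half_mul_cos_half (x : ℝ) : sin x = 2 * sin (x / 2) * cos (x / 2) := by
  rw [← sin_two_mul, mul_div_cancel₀ _ two_ne_zero]

variable {E : Type*} [NormedAddCommGroup E] [InnerProductSpace ℝ E]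

theorem inner_sub_inner_div_norm_sq_smul_self (w x : E) :
    ⟪w, x - (⟪w, x⟫ / ‖w‖ ^ 2) • w⟫ = 0 := by
  rcases eq_or_ne w 0 with rfl | hw
  · simp
  rw [inner_sub_right, real_inner_smul_right, real_inner_self_eq_norm_sq]
  field_simp
  ring

theorem inner_sub_inner_div_norm_sq_smul {w : E} (hw : w ≠ 0) (x : E) :
    ⟪x, x - (⟪w, x⟫ / ‖w‖ ^ 2) • w⟫ = (‖x‖ * sin (angle w x)) ^ 2 := by
  rcases eq_or_ne x 0 with rfl | hx
  · simp
  rw [inner_sub_right, real_inner_smul_right, real_inner_self_eq_norm_sq, real_inner_comm w x,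
    mul_pow, sin_sq, cos_angle]
  field_simp

theorem norm_sub_inner_div_norm_sq_smul {w : E} (hw : w ≠ 0) (x : E) :
    ‖x - (⟪w, x⟫ / ‖w‖ ^ 2) • w‖ = ‖x‖ * sin (angle w x) := by
  have hsq : ‖x - (⟪w, x⟫ / ‖w‖ ^ 2) • w‖ ^ 2 = (‖x‖ * sin (angle w x)) ^ 2 := by
    rw [← real_inner_self_eq_norm_sq]
    nth_rewrite 1 [inner_sub_left]
    rw [real_inner_smul_left, inner_sub_inner_div_norm_sq_smul_self,
      inner_sub_inner_div_norm_sq_smul hw, mul_zero, sub_zero]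
  exact (pow_left_inj₀ (norm_nonneg _)
    (mul_nonneg (norm_nonneg _) (sin_angle_nonneg _ _)) two_ne_zero).mp hsq

theorem norm_add_eq_two_mul_cos_half_angle {x y : E} (hx : ‖x‖ = 1) (hy : ‖y‖ = 1) :
    ‖x + y‖ = 2 * cos (angle x y / 2) := by
  have hcos : 0 ≤ cos (angle x y / 2) :=
    cos_nonneg_of_mem_Icc ⟨by linarith [angle_nonneg x y, pi_pos],
      by linarith [angle_le_pi x y]⟩
  have hsq : ‖x + y‖ ^ 2 = (2 * cos (angle x y / 2)) ^ 2 := by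
    rw [norm_add_sq_real, inner_eq_cos_angle_of_norm_eq_one hx hy, hx, hy, mul_pow, cos_sq,
      mul_div_cancel₀ _ two_ne_zero]
    ring
  exact (pow_left_inj₀ (norm_nonneg _) (by positivity) two_ne_zero).mp hsq

theorem inner_normalize_add_normalize_sub_inner_div_norm_sq_smul {w x : E} (hw : w ≠ 0)
    (hx : ‖x‖ = 1) (h0 : 0 < angle w x) (hπ : angle w x < π) :
    ⟪NormedSpace.normalize (NormedSpace.normalize w + x),
        NormedSpace.normalize (x - (⟪w, x⟫ / ‖w‖ ^ 2) • w)⟫ = sin (angle w x / 2) := by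
  have hsin : sin (angle w x / 2) ≠ 0 :=
    (sin_pos_of_pos_of_lt_pi (by linarith) (by linarith [angle_le_pi w x])).ne'
  have hcos : cos (angle w x / 2) ≠ 0 :=
    (cos_pos_of_mem_Ioo ⟨by linarith [pi_pos], by linarith⟩).ne'
  have hbisector : ‖NormedSpace.normalize w + x‖ = 2 * cos (angle w x / 2) := by
    rw [norm_add_eq_two_mul_cos_half_angle (NormedSpace.norm_normalize hw) hx,
      angle_normalize_left]
  simp only [NormedSpace.normalize] at hbisector ⊢
  rw [real_inner_smul_left, real_inner_smul_right, inner_add_left, real_inner_smul_left,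
    inner_sub_inner_div_norm_sq_smul_self, inner_sub_inner_div_norm_sq_smul hw,
    norm_sub_inner_div_norm_sq_smul hw, hbisector, hx]
  rw [sin_eq_two_mul_sin_half_mul_cos_half (angle w x)]
  field_simp
  ring

end RealInnerProductSpace

/-- The inner product between the expected coarse gradient and the true population
gradient w.r.t. `w` equals `sin(θ)/(2(2π)^{3/2}‖w‖) (v^T v*)² ≥ 0`. -/
theorem coarse_grad_inner_true_grad {m n : ℕ}
    (v vs : EuclideanSpace ℝ (Fin m))
    (w ws : EuclideanSpace ℝ (Fin n)) (hw : w ≠ 0) (hws : ‖ws‖ = 1)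
    (hθ0 : 0 < angle w ws) (hθπ : angle w ws < Real.pi) :
    (inner ℝ
        (((∑ i, v i ^ 2 + (∑ i, v i) ^ 2 - (∑ i, v i) * (∑ i, vs i) + ∑ i, v i * vs i)
              / (2 * Real.sqrt (2 * Real.pi))) • ‖w‖⁻¹ • w
          - (Real.cos (angle w ws / 2) * (∑ i, v i * vs i) / Real.sqrt (2 * Real.pi)) •
              ‖‖w‖⁻¹ • w + ws‖⁻¹ • (‖w‖⁻¹ • w + ws))
        ((-(∑ i, v i * vs i) / (2 * Real.pi * ‖w‖)) •
          ‖ws - ((inner ℝ w ws : ℝ) / ‖w‖ ^ 2) • w‖⁻¹ •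
            (ws - ((inner ℝ w ws : ℝ) / ‖w‖ ^ 2) • w)) : ℝ)
      = Real.sin (angle w ws) / (2 * Real.sqrt (2 * Real.pi) ^ 3 * ‖w‖)
          * (∑ i, v i * vs i) ^ 2 := by
  simp only [← NormedSpace.normalize.eq_1]
  have horth : inner ℝ (NormedSpace.normalize w)
      (NormedSpace.normalize (ws - ((inner ℝ w ws : ℝ) / ‖w‖ ^ 2) • w)) = 0 := by
    simp only [NormedSpace.normalize, real_inner_smul_left, real_inner_smul_right,
      inner_sub_inner_div_norm_sq_smul_self, mul_zero]
  rw [inner_sub_left, real_inner_smul_left, real_inner_smul_left, real_inner_smul_right,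
    real_inner_smul_right, horth,
    inner_normalize_add_normalize_sub_inner_div_norm_sq_smul hw hws hθ0 hθπ]
  have hcube : Real.sqrt (2 * Real.pi) ^ 3 = Real.sqrt (2 * Real.pi) * (2 * Real.pi) := by
    rw [pow_succ, Real.sq_sqrt (by positivity)]
    ring
  rw [sin_eq_two_mul_sin_half_mul_cos_half (angle w ws), hcube]
  field_simp
  ring
end
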